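/- arXiv:1203.2670 — 8 statements merged into one kernel-verified Lean document; each statement's English description precedes it below -/
import Mathlib

section
/- If a positive integer n admits a Wilf partition with exactly r distinct parts, then r ≤ (6n)^{1/3}, i.e., r³ ≤ 6n. -/
/-!
Write the partition as `n = ∑ s * m(s)` over its `r` distinct parts `s`, with multiplicities
`m(s)`; both `s ↦ s` and `m` are injective with positive values. Peeling off one column of the
Ferrers diagram, `∑ s * m(s) = ∑ m(s) + ∑ (s - 1) * m(s)`: the first sum is at least
`1 + ⋯ + r = r(r+1)/2` (by the same peeling argument), and at most one part equals `1`, so the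
second sum is a sum of the same shape over at least `r - 1` parts. By induction
`6 ∑ s * m(s) ≥ r(r+1)(r+2) ≥ r³`.
-/

/-- A Wilf partition: the multiplicities of distinct parts are all different. -/
def IsWilf {n : ℕ} (P : n.Partition) : Prop :=
  ∀ p ∈ P.parts, ∀ q ∈ P.parts,
    Multiset.count p P.parts = Multiset.count q P.parts → p = q

namespace Finset

variable {ι : Type*} {s : Finset ι} {f : ι → ℕ}

theorem exists_subset_card_le_add_one_injOn_sub_one (hf : Set.InjOn f s)
    (hpos : ∀ i ∈ s, 0 < f i) :
    ∃ t ⊆ s, #s ≤ #t + 1 ∧ Set.InjOn (f · - 1) t ∧ ∀ i ∈ t, 0 < f i - 1 := by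
  classical
  refine ⟨{i ∈ s | 1 < f i}, filter_subset _ _, ?_, ?_, ?_⟩
  · have hones : #{i ∈ s | ¬1 < f i} ≤ 1 :=
      card_le_one.2 fun i hi j hj ↦ by
        simp only [mem_filter] at hi hj
        exact hf hi.1 hj.1 (by have := hpos i hi.1; have := hpos j hj.1; omega)
    have hcount := card_filter_add_card_filter_not (s := s) (1 < f ·)
    omega
  · intro i hi j hj hij
    rw [mem_coe, mem_filter] at hi hj
    exact hf hi.1 hj.1 (by simp only at hij; omega)
  · intro i hi
    simp only [mem_filter] at hi
    omega

theorem mul_add_one_le_two_mul_sum_of_injOn (hf : Set.InjOn f s) (hpos : ∀ i ∈ s, 0 < f i)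
    {r : ℕ} (hr : r ≤ #s) : r * (r + 1) ≤ 2 * ∑ i ∈ s, f i := by
  induction r generalizing s f with
  | zero => simp
  | succ r ih =>
    obtain ⟨t, hts, hcard, hinj, hpos'⟩ := exists_subset_card_le_add_one_injOn_sub_one hf hpos
    have hsplit : ∑ i ∈ s, f i = ∑ i ∈ s, (f i - 1) + #s := by
      rw [card_eq_sum_ones, ← sum_add_distrib]
      exact sum_congr rfl fun i hi ↦ by have := hpos i hi; omega
    have hpeel : ∑ i ∈ t, (f i - 1) ≤ ∑ i ∈ s, (f i - 1) := sum_le_sum_of_subset hts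
    have hrest := ih hinj hpos' (by omega)
    nlinarith

theorem mul_add_one_mul_add_two_le_six_mul_sum_mul_of_injOn {g : ι → ℕ} (hf : Set.InjOn f s)
    (hfpos : ∀ i ∈ s, 0 < f i) (hg : Set.InjOn g s) (hgpos : ∀ i ∈ s, 0 < g i)
    {r : ℕ} (hr : r ≤ #s) : r * (r + 1) * (r + 2) ≤ 6 * ∑ i ∈ s, f i * g i := by
  induction r generalizing s f with
  | zero => simp
  | succ r ih =>
    obtain ⟨t, hts, hcard, hinj, hpos'⟩ := exists_subset_card_le_add_one_injOn_sub_one hf hfpos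
    have hsplit : ∑ i ∈ s, f i * g i = ∑ i ∈ s, (f i - 1) * g i + ∑ i ∈ s, g i := by
      rw [← sum_add_distrib]
      exact sum_congr rfl fun i hi ↦ by
        obtain ⟨k, hk⟩ := Nat.exists_eq_add_one_of_ne_zero (hfpos i hi).ne'
        simp [hk, add_mul]
    have hpeel : ∑ i ∈ t, (f i - 1) * g i ≤ ∑ i ∈ s, (f i - 1) * g i := sum_le_sum_of_subset hts
    have hcol := mul_add_one_le_two_mul_sum_of_injOn hg hgpos hr
    have hrest :=
      ih hinj hpos' (hg.mono (coe_subset.2 hts)) (fun i hi ↦ hgpos i (hts hi)) (by omega)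
    nlinarith

end Finset

open Finset

theorem stmt2_general (n : ℕ) (P : n.Partition) (hP : IsWilf P)
    (r : ℕ) (hr : P.parts.toFinset.card = r) :
    r ^ 3 ≤ 6 * n := by
  have hn : ∑ s ∈ P.parts.toFinset, s * P.parts.count s = n := by
    simpa [mul_comm, P.parts_sum] using (sum_multiset_count P.parts).symm
  have hbound := mul_add_one_mul_add_two_le_six_mul_sum_mul_of_injOn (s := P.parts.toFinset)
    (f := id) (g := P.parts.count) Function.injective_id.injOn
    (fun s hs ↦ P.parts_pos (Multiset.mem_toFinset.1 hs))
    (fun p hp q hq ↦ hP p (Multiset.mem_toFinset.1 hp) q (Multiset.mem_toFinset.1 hq))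
    (fun s hs ↦ Multiset.count_pos.2 (Multiset.mem_toFinset.1 hs)) hr.ge
  rw [← hn]
  calc r ^ 3 ≤ r * (r + 1) * (r + 2) := by nlinarith
    _ ≤ _ := hbound

theorem stmt2 (n : ℕ) (hn : 0 < n) (P : n.Partition) (hP : IsWilf P)
    (r : ℕ) (hr : P.parts.toFinset.card = r) :
    r ^ 3 ≤ 6 * n :=
  stmt2_general n P hP r hr
end

section
/- If a positive integer n admits a Wilf partition with exactly r distinct parts, then n ≥ r³/6 + r²/2 + r/3, i.e., 6n ≥ r³ + 3r² + 2r. -/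
open Finset

theorem card_mul_card_add_one_le_two_mul_sum {S : Finset ℕ} (h0 : 0 ∉ S) :
    #S * (#S + 1) ≤ 2 * ∑ p ∈ S, p := by
  induction S using Finset.induction_on_max with
  | empty => simp
  | insert a s hlt ih =>
    have ha : a ∉ s := fun h => lt_irrefl a (hlt a h)
    have hs : s ⊆ Ioo 0 a := fun x hx =>
      mem_Ioo.2 ⟨Nat.pos_of_ne_zero fun h => h0 (h ▸ mem_insert_of_mem hx), hlt x hx⟩
    have hcard : #s + 1 ≤ a := by
      have := card_le_card hs
      simp only [Nat.card_Ioo] at this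
      have : a ≠ 0 := fun h => h0 (h ▸ mem_insert_self a s)
      omega
    rw [card_insert_of_notMem ha, sum_insert ha]
    nlinarith [ih fun h => h0 (mem_insert_of_mem h)]

theorem card_le_card_filter_one_lt_add_one {S : Finset ℕ} {m : ℕ → ℕ}
    (hm : ∀ p ∈ S, m p ≠ 0) (hinj : Set.InjOn m S) :
    #S ≤ #(S.filter (1 < m ·)) + 1 := by
  have hone : #(S.filter (¬ 1 < m ·)) ≤ 1 := by
    refine card_le_one.2 fun a ha b hb => ?_
    rw [mem_filter] at ha hb
    exact hinj ha.1 hb.1 (by have := hm a ha.1; have := hm b hb.1; omega)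
  have := card_filter_add_card_filter_not (s := S) (1 < m ·)
  omega

theorem sum_mul_eq_sum_add_sum_filter_mul_sub_one {S : Finset ℕ} {m : ℕ → ℕ}
    (hm : ∀ p ∈ S, m p ≠ 0) :
    ∑ p ∈ S, p * m p = ∑ p ∈ S, p + ∑ p ∈ S.filter (1 < m ·), p * (m p - 1) := by
  rw [sum_filter_of_ne fun p _ h => by have := right_ne_zero_of_mul h; omega, ← sum_add_distrib]
  refine sum_congr rfl fun p hp => ?_
  obtain ⟨k, hk⟩ := Nat.exists_eq_succ_of_ne_zero (hm p hp)
  rw [hk, Nat.succ_sub_one, Nat.mul_succ, add_comm]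

theorem card_mul_add_one_mul_add_two_le_six_mul_sum_mul {S : Finset ℕ} {m : ℕ → ℕ}
    (h0 : 0 ∉ S) (hm : ∀ p ∈ S, m p ≠ 0) (hinj : Set.InjOn m S) :
    #S * (#S + 1) * (#S + 2) ≤ 6 * ∑ p ∈ S, p * m p := by
  induction hN : ∑ p ∈ S, m p using Nat.strong_induction_on generalizing S m with
  | _ N ih =>
    rcases S.eq_empty_or_nonempty with rfl | hne
    · simp
    rw [sum_mul_eq_sum_add_sum_filter_mul_sub_one hm]
    set T := S.filter (1 < m ·)
    have hTS : T ⊆ S := filter_subset _ S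
    have hmT : ∀ p ∈ T, m p - 1 ≠ 0 := fun p hp => by have := (mem_filter.1 hp).2; omega
    have hinjT : Set.InjOn (m · - 1) T := fun p hp q hq h => by
      have := (mem_filter.1 hp).2; have := (mem_filter.1 hq).2
      exact hinj (hTS hp) (hTS hq) (by simp only at h; omega)
    have hlt : ∑ p ∈ T, (m p - 1) < N := by
      obtain ⟨a, ha⟩ := hne
      calc ∑ p ∈ T, (m p - 1) ≤ ∑ p ∈ S, (m p - 1) := sum_le_sum_of_subset hTS
        _ < ∑ p ∈ S, m p :=
          sum_lt_sum (fun p _ => Nat.sub_le _ _) ⟨a, ha, by have := hm a ha; omega⟩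
        _ = N := hN
    have hT := ih _ hlt (fun h => h0 (hTS h)) hmT hinjT rfl
    have hS := card_mul_card_add_one_le_two_mul_sum h0
    have hcard : #S ≤ #T + 1 := card_le_card_filter_one_lt_add_one hm hinj
    obtain ⟨r, hr⟩ : ∃ r, #S = r + 1 := ⟨#S - 1, by have := hne.card_pos; omega⟩
    have hmono : r * (r + 1) * (r + 2) ≤ #T * (#T + 1) * (#T + 2) := by gcongr <;> omega
    rw [hr] at hS ⊢
    linarith

theorem stmt3_general (n : ℕ) (P : n.Partition) (hP : IsWilf P)
    (r : ℕ) (hr : P.parts.toFinset.card = r) :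
    r ^ 3 + 3 * r ^ 2 + 2 * r ≤ 6 * n := by
  have hn : ∑ p ∈ P.parts.toFinset, p * P.parts.count p = n := by
    simpa [mul_comm, P.parts_sum] using (sum_multiset_count P.parts).symm
  have key := card_mul_add_one_mul_add_two_le_six_mul_sum_mul (m := P.parts.count)
    (fun h => (P.parts_pos (Multiset.mem_toFinset.1 h)).false)
    (fun p hp => Multiset.count_ne_zero.2 (Multiset.mem_toFinset.1 hp))
    (fun p hp q hq => hP p (Multiset.mem_toFinset.1 hp) q (Multiset.mem_toFinset.1 hq))
  rw [hr, hn] at key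
  calc r ^ 3 + 3 * r ^ 2 + 2 * r = r * (r + 1) * (r + 2) := by ring
    _ ≤ 6 * n := key

theorem stmt3 (n : ℕ) (hn : 0 < n) (P : n.Partition) (hP : IsWilf P)
    (r : ℕ) (hr : P.parts.toFinset.card = r) :
    r ^ 3 + 3 * r ^ 2 + 2 * r ≤ 6 * n :=
  stmt3_general n P hP r hr
end

section
/- The limit inferior, as n → ∞, of (ln f(n)) / (n^{1/3}·ln n) is at least 6^{1/3}/3; equivalently, ln f(n) ≥ (1 + o(1))·(6^{1/3}/3)·n^{1/3}·ln n as n → ∞. -/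
open Filter Real

/-- `wilfCount n` is the number of Wilf partitions of `n`. -/
noncomputable def wilfCount (n : ℕ) : ℕ :=
  Nat.card {P : n.Partition // IsWilf P}

/-!
Split `N ≈ (6 n)^(1/3)` into `T` blocks of `b ≈ ε n^(1/3)` consecutive integers. The `t`-th block
of multiplicities `b t + 2, …, b t + b + 1` goes to the `t`-th block of parts counted from the top,
matched by an arbitrary permutation of the block, and one part of multiplicity one fills up the
rest. Pairing large multiplicities with small parts keeps `∑ multiplicity * part ≈ N³/6 ≤ n`, so
the `(b!)^T` choices give distinct Wilf partitions of `n`, and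
`log (b!)^T ≈ N log b ≈ (6^(1/3) - 3ε) n^(1/3) log n / 3`.

A `liminf` in `ℝ` of a sequence that is not bounded above is a junk value, so an upper bound is
needed as well: a Wilf partition has at most `t` parts below `t`, at most `t` multiplicities below
`t` and at most `n/t²` further distinct parts, hence `O(n^(1/3))` distinct parts; it is determined
by its pairs (part, multiplicity) in `[0, n]²`, so `log f(n) = O(n^(1/3) log n)`.
-/

open Finset Topology
open scoped Nat

section PrescribedMultiplicities

variable {ι : Type*} [Fintype ι]

lemma count_sum_replicate_of_injective {α : Type*} [DecidableEq α] {μ : ι → ℕ} {v : ι → α}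
    (hv : Function.Injective v) (i : ι) :
    (∑ j, Multiset.replicate (μ j) (v j)).count (v i) = μ i := by
  rw [Multiset.count_sum', Finset.sum_eq_single i (fun j _ hj => by
    rw [Multiset.count_replicate, if_neg (hv.ne hj)]) (by simp)]
  simp

lemma count_sum_replicate_eq_zero {α : Type*} [DecidableEq α] {μ : ι → ℕ} {v : ι → α} {a : α}
    (ha : ∀ j, v j ≠ a) : (∑ j, Multiset.replicate (μ j) (v j)).count a = 0 := by
  simp [Multiset.count_sum', Multiset.count_replicate, ha]

/-- The partition of `n` with each `v i` as a part of multiplicity `μ i`, completed by one more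
part `n - ∑ i, μ i * v i`. -/
def partitionOfMultiplicities (n : ℕ) (μ v : ι → ℕ) (hv : ∀ i, 0 < v i)
    (hn : ∑ i, μ i * v i < n) : n.Partition where
  parts := (n - ∑ i, μ i * v i) ::ₘ ∑ i, Multiset.replicate (μ i) (v i)
  parts_pos {a} ha := by
    rcases Multiset.mem_cons.1 ha with rfl | ha
    · omega
    · obtain ⟨i, -, hi⟩ := Multiset.mem_sum.1 ha
      exact (Multiset.eq_of_mem_replicate hi) ▸ hv i
  parts_sum := by
    simp only [Multiset.sum_cons, Multiset.sum_sum, Multiset.sum_replicate, smul_eq_mul]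
    omega

variable {n m : ℕ} {μ v : ι → ℕ} {hv₀ : ∀ i, 0 < v i}

lemma mem_partitionOfMultiplicities {hn : ∑ i, μ i * v i < n} {a : ℕ}
    (ha : a ∈ (partitionOfMultiplicities n μ v hv₀ hn).parts) :
    a = n - ∑ i, μ i * v i ∨ ∃ i, v i = a := by
  rcases Multiset.mem_cons.1 ha with h | ha
  · exact Or.inl h
  · obtain ⟨i, -, hi⟩ := Multiset.mem_sum.1 ha
    exact Or.inr ⟨i, (Multiset.eq_of_mem_replicate hi).symm⟩

lemma count_partitionOfMultiplicities (hv : Function.Injective v) (hm : ∀ i, v i ≤ m)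
    (hn : ∑ i, μ i * v i + m < n) (i : ι) :
    (partitionOfMultiplicities n μ v hv₀ (by omega)).parts.count (v i) = μ i := by
  have := hm i
  rw [partitionOfMultiplicities, Multiset.count_cons_of_ne (by omega),
    count_sum_replicate_of_injective hv]

lemma count_partitionOfMultiplicities_le_one {hn : ∑ i, μ i * v i < n} {a : ℕ}
    (ha : ∀ i, v i ≠ a) : (partitionOfMultiplicities n μ v hv₀ hn).parts.count a ≤ 1 := by
  rw [partitionOfMultiplicities, Multiset.count_cons, count_sum_replicate_eq_zero ha]
  split_ifs <;> omega

lemma isWilf_partitionOfMultiplicities (hμ : Function.Injective μ) (hμ₂ : ∀ i, 2 ≤ μ i)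
    (hv : Function.Injective v) (hm : ∀ i, v i ≤ m) (hn : ∑ i, μ i * v i + m < n) :
    IsWilf (partitionOfMultiplicities n μ v hv₀ (by omega)) := by
  have hcount := count_partitionOfMultiplicities hv hm hn (hv₀ := hv₀)
  have hslack : ∀ i, v i ≠ n - ∑ i, μ i * v i := fun i => by have := hm i; omega
  have hslack_count : (partitionOfMultiplicities n μ v hv₀ (by omega)).parts.count
      (n - ∑ i, μ i * v i) ≤ 1 := count_partitionOfMultiplicities_le_one hslack
  intro p hp q hq hpq
  rcases mem_partitionOfMultiplicities hp with rfl | ⟨i, rfl⟩ <;>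
    rcases mem_partitionOfMultiplicities hq with rfl | ⟨j, rfl⟩
  · rfl
  · have := hμ₂ j; rw [hcount] at hpq; omega
  · have := hμ₂ i; rw [hcount] at hpq; omega
  · rw [hcount, hcount] at hpq
    rw [hμ hpq]

end PrescribedMultiplicities

theorem card_le_wilfCount {ι α : Type*} [Fintype ι] {μ : ι → ℕ} {m n : ℕ}
    (hμ : Function.Injective μ) (hμ₂ : ∀ i, 2 ≤ μ i)
    (v : α → ι → ℕ) (hv : Function.Injective v) (hinj : ∀ a, Function.Injective (v a))
    (hpos : ∀ a i, 0 < v a i) (hm : ∀ a i, v a i ≤ m) (hn : ∀ a, ∑ i, μ i * v a i + m < n) :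
    Nat.card α ≤ wilfCount n := by
  let P a : n.Partition := partitionOfMultiplicities n μ (v a) (hpos a) (by have := hn a; omega)
  have hcount a i : (P a).parts.count (v a i) = μ i :=
    count_partitionOfMultiplicities (hinj a) (hm a) (hn a) i
  refine Nat.card_le_card_of_injective (fun a => (⟨P a, isWilf_partitionOfMultiplicities hμ hμ₂
    (hinj a) (hm a) (hn a)⟩ : {P : n.Partition // IsWilf P})) fun a b hab => hv ?_
  have hP : P a = P b := congrArg Subtype.val hab
  funext i
  -- `v b i` occurs in `P a` with multiplicity `μ i ≥ 2`, so it is some `v a j`, and then `j = i`.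
  have hi : (P a).parts.count (v b i) = μ i := hP ▸ hcount b i
  obtain ⟨j, hj⟩ : ∃ j, v a j = v b i := by
    by_contra! h
    have : (P a).parts.count (v b i) ≤ 1 := count_partitionOfMultiplicities_le_one h
    have := hμ₂ i
    omega
  rw [← hj, hcount, hμ.eq_iff] at hi
  rw [← hj, hi]

lemma two_mul_sum_range_sub (T : ℕ) : 2 * ∑ t ∈ range T, (T - t) = T * (T + 1) := by
  induction T with
  | zero => simp
  | succ T ih =>
    rw [sum_range_succ']
    simp only [Nat.add_sub_add_right, Nat.sub_zero]
    rw [mul_add, ih]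
    ring

lemma six_mul_sum_range_succ_mul_sub (T : ℕ) :
    6 * ∑ t ∈ range T, (t + 1) * (T - t) = T * (T + 1) * (T + 2) := by
  induction T with
  | zero => simp
  | succ T ih =>
    have hsplit : ∑ t ∈ range T, (t + 1 + 1) * (T + 1 - (t + 1))
        = ∑ t ∈ range T, (t + 1) * (T - t) + ∑ t ∈ range T, (T - t) := by
      rw [← sum_add_distrib]
      exact sum_congr rfl fun t _ => by rw [Nat.add_sub_add_right]; ring
    rw [sum_range_succ', hsplit, Nat.sub_zero]
    have := two_mul_sum_range_sub T
    nlinarith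

section BlockPermutations

variable {T b : ℕ}

def blockMultiplicity (x : Fin T × Fin b) : ℕ := finProdFinEquiv x + 2

/-- Block `t` of parts is the `t`-th block of `b` integers of `1, …, T * b` counted from the top,
permuted by `σ t`. -/
def blockPart (σ : Fin T → Equiv.Perm (Fin b)) (x : Fin T × Fin b) : ℕ :=
  finProdFinEquiv (x.1.rev, σ x.1 x.2) + 1

lemma blockMultiplicity_injective : Function.Injective (blockMultiplicity (T := T) (b := b)) :=
  fun _ _ h => finProdFinEquiv.injective (Fin.ext (Nat.add_right_cancel h))

lemma blockPart_injective (σ : Fin T → Equiv.Perm (Fin b)) : Function.Injective (blockPart σ) := by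
  rintro ⟨t, r⟩ ⟨t', r'⟩ h
  have h' := finProdFinEquiv.injective (Fin.ext (Nat.add_right_cancel h))
  simp only [Prod.mk.injEq, Fin.rev_inj] at h'
  obtain ⟨rfl, h⟩ := h'
  rw [(σ t).injective h]

lemma blockPart_injective_left : Function.Injective (blockPart (T := T) (b := b)) := by
  intro σ τ h
  ext t r
  have h' := finProdFinEquiv.injective (Fin.ext (Nat.add_right_cancel (congrFun h (t, r))))
  simp only [Prod.mk.injEq] at h'
  rw [h'.2]

lemma blockPart_le (σ : Fin T → Equiv.Perm (Fin b)) (x : Fin T × Fin b) :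
    blockPart σ x ≤ T * b := by
  have := (finProdFinEquiv (x.1.rev, σ x.1 x.2)).isLt
  rw [blockPart]; omega

lemma blockMultiplicity_le (x : Fin T × Fin b) : blockMultiplicity x ≤ b * (x.1 + 1) + 1 := by
  have := x.2.isLt
  simp only [blockMultiplicity, finProdFinEquiv_apply_val]
  linarith

lemma blockPart_le_mul_sub (σ : Fin T → Equiv.Perm (Fin b)) (x : Fin T × Fin b) :
    blockPart σ x ≤ b * (T - x.1) := by
  have h₁ := (σ x.1 x.2).isLt
  have h₂ : T - x.1 = T - (x.1 + 1) + 1 := by omega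
  simp only [blockPart, finProdFinEquiv_apply_val, Fin.val_rev, h₂]
  linarith

lemma six_mul_sum_blockMultiplicity_mul_blockPart_le (σ : Fin T → Equiv.Perm (Fin b)) :
    6 * ∑ x, blockMultiplicity x * blockPart σ x
      ≤ T * b * (T * b + b) * (T * b + 2 * b) + 3 * (T * b) * (T * b + b) := by
  have hsum : ∑ x, blockMultiplicity x * blockPart σ x
      ≤ ∑ t ∈ range T, b * ((b * (t + 1) + 1) * (b * (T - t))) := by
    calc ∑ x, blockMultiplicity x * blockPart σ x
        ≤ ∑ x : Fin T × Fin b, (b * (x.1 + 1) + 1) * (b * (T - x.1)) :=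
          sum_le_sum fun x _ => Nat.mul_le_mul (blockMultiplicity_le x) (blockPart_le_mul_sub σ x)
      _ = ∑ t ∈ range T, b * ((b * (t + 1) + 1) * (b * (T - t))) := by
          simp [Fintype.sum_prod_type, Fin.sum_univ_eq_sum_range
            (fun t => b * ((b * (t + 1) + 1) * (b * (T - t)))) T]
  have hsplit : ∑ t ∈ range T, b * ((b * (t + 1) + 1) * (b * (T - t)))
      = b ^ 3 * ∑ t ∈ range T, (t + 1) * (T - t) + b ^ 2 * ∑ t ∈ range T, (T - t) := by
    rw [mul_sum, mul_sum, ← sum_add_distrib]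
    exact sum_congr rfl fun t _ => by ring
  have h₁ := six_mul_sum_range_succ_mul_sub T
  have h₂ := two_mul_sum_range_sub T
  calc 6 * ∑ x, blockMultiplicity x * blockPart σ x
      ≤ b ^ 3 * (6 * ∑ t ∈ range T, (t + 1) * (T - t))
          + 3 * b ^ 2 * (2 * ∑ t ∈ range T, (T - t)) := by rw [hsplit] at hsum; linarith
    _ = _ := by rw [h₁, h₂]; ring

theorem factorial_pow_le_wilfCount {n : ℕ} (h : (T * b + 2 * b + 2) ^ 3 ≤ 6 * n) :
    b ! ^ T ≤ wilfCount n := by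
  have hsum (σ : Fin T → Equiv.Perm (Fin b)) :
      ∑ x, blockMultiplicity x * blockPart σ x + T * b < n := by
    have hS := six_mul_sum_blockMultiplicity_mul_blockPart_le σ
    have hcube : T * b * (T * b + b) * (T * b + 2 * b) + 3 * (T * b) * (T * b + b) + 6 * (T * b)
        < (T * b + 2 * b + 2) ^ 3 := by
      generalize T * b = N
      nlinarith [Nat.zero_le (N * b), Nat.zero_le (N * N * b), Nat.zero_le (N * b * b),
        Nat.zero_le (b * b * b), Nat.zero_le (b * b)]
    omega
  calc b ! ^ T = Nat.card (Fin T → Equiv.Perm (Fin b)) := by simp [Fintype.card_perm]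
    _ ≤ wilfCount n :=
      card_le_wilfCount blockMultiplicity_injective (fun x => by simp [blockMultiplicity])
        blockPart blockPart_injective_left blockPart_injective
        (fun σ x => by simp [blockPart]) blockPart_le hsum

end BlockPermutations

lemma mul_log_sub_le_log_factorial (b : ℕ) : b * log b - b ≤ log (b ! : ℝ) := by
  rcases b.eq_zero_or_pos with rfl | hb
  · simp
  have hpow : (0 : ℝ) < (b : ℝ) ^ b := by positivity
  have h := Real.pow_div_factorial_le_exp (b : ℝ) b.cast_nonneg b
  rw [← Real.log_le_iff_le_exp (by positivity), Real.log_div hpow.ne' (by positivity),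
    Real.log_pow] at h
  linarith

theorem mul_log_sub_one_le_log_wilfCount {n b : ℕ} {y : ℝ} (hb : 1 ≤ log b)
    (hy : y ^ 3 ≤ 6 * n) : (y - 3 * b - 2) * (log b - 1) ≤ log (wilfCount n) := by
  have hb₀ : (0 : ℝ) < b := by
    rcases b.eq_zero_or_pos with rfl | hb₀
    · norm_num at hb
    · exact_mod_cast hb₀
  rcases le_or_gt (y - 3 * b - 2) 0 with hy₀ | hy₀
  · exact (mul_nonpos_of_nonpos_of_nonneg hy₀ (by linarith)).trans (Real.log_natCast_nonneg _)
  set T := ⌊(y - 2 * b - 2) / b⌋₊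
  have hT₁ : (T : ℝ) * b ≤ y - 2 * b - 2 :=
    (le_div_iff₀ hb₀).1 (Nat.floor_le (div_nonneg (by linarith) hb₀.le))
  have hT₂ : y - 3 * b - 2 < T * b := by
    have := (div_lt_iff₀ hb₀).1 (Nat.lt_floor_add_one ((y - 2 * b - 2) / b))
    linarith
  have hcube : (T * b + 2 * b + 2) ^ 3 ≤ 6 * n := by
    have : ((T * b + 2 * b + 2 : ℕ) : ℝ) ^ 3 ≤ 6 * n :=
      (pow_le_pow_left₀ (by positivity) (by push_cast; linarith) 3).trans hy
    exact_mod_cast this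
  calc (y - 3 * b - 2) * (log b - 1) ≤ T * b * (log b - 1) :=
        mul_le_mul_of_nonneg_right hT₂.le (by linarith)
    _ = T * (b * log b - b) := by ring
    _ ≤ T * log (b ! : ℝ) :=
        mul_le_mul_of_nonneg_left (mul_log_sub_le_log_factorial b) T.cast_nonneg
    _ = log ((b ! ^ T : ℕ) : ℝ) := by push_cast; rw [Real.log_pow]
    _ ≤ log (wilfCount n) :=
        Real.log_le_log (by positivity) (by exact_mod_cast factorial_pow_le_wilfCount hcube)

lemma card_filter_powerset_card_le {α : Type*} (s : Finset α) (K : ℕ) :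
    #{A ∈ s.powerset | #A ≤ K} ≤ (#s + 1) ^ K := by
  classical
  calc #{A ∈ s.powerset | #A ≤ K} ≤ #((range (K + 1)).biUnion fun j => s.powersetCard j) := by
        refine card_le_card fun A hA => ?_
        rw [mem_filter, mem_powerset] at hA
        exact mem_biUnion.2 ⟨#A, mem_range.2 (by omega), mem_powersetCard.2 ⟨hA.1, rfl⟩⟩
    _ ≤ ∑ j ∈ range (K + 1), (#s).choose j :=
        card_biUnion_le.trans_eq (sum_congr rfl fun j _ => card_powersetCard j s)
    _ ≤ ∑ j ∈ range (K + 1), #s ^ j * 1 ^ (K - j) * K.choose j := by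
        refine sum_le_sum fun j hj => ?_
        rw [one_pow, mul_one]
        exact (Nat.choose_le_pow _ _).trans
          (Nat.le_mul_of_pos_right _ (Nat.choose_pos (Nat.lt_succ_iff.1 (mem_range.1 hj))))
    _ = (#s + 1) ^ K := (add_pow _ _ _).symm

lemma Nat.Partition.count_le {n : ℕ} (P : n.Partition) (a : ℕ) : P.parts.count a ≤ n := by
  have := Multiset.card_nsmul_le_sum (a := 1) fun _ hx => P.parts_pos hx
  rw [smul_eq_mul, mul_one, P.parts_sum] at this
  exact (Multiset.count_le_card a _).trans this

lemma wilfCount_le_pow {n K : ℕ} (hK : ∀ P : n.Partition, IsWilf P → #P.parts.toFinset ≤ K) :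
    wilfCount n ≤ ((n + 1) ^ 2 + 1) ^ K := by
  classical
  set S := range (n + 1) ×ˢ range (n + 1)
  let graph (P : n.Partition) : Finset (ℕ × ℕ) := (Multiset.toFinsupp P.parts).graph
  have hgraph (P : {P : n.Partition // IsWilf P}) : graph P ∈ {A ∈ S.powerset | #A ≤ K} := by
    rw [mem_filter, mem_powerset]
    refine ⟨fun ⟨a, k⟩ h => ?_, ?_⟩
    · rw [Finsupp.mk_mem_graph_iff, Multiset.toFinsupp_apply] at h
      have ha : a ∈ P.1.parts := Multiset.count_ne_zero.1 (h.1 ▸ h.2)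
      have hk : k ≤ n := h.1 ▸ P.1.count_le a
      simp [S, Nat.lt_succ_iff.2 (P.1.le_of_mem_parts ha), Nat.lt_succ_iff.2 hk]
    · simp only [graph, Finsupp.graph, card_map, Multiset.toFinsupp_support]
      exact hK P.1 P.2
  calc wilfCount n ≤ Nat.card ({A ∈ S.powerset | #A ≤ K} : Finset _) :=
        Nat.card_le_card_of_injective (fun P => ⟨graph P, hgraph P⟩) fun P Q h =>
          Subtype.ext (Nat.Partition.ext (Multiset.toFinsupp.injective
            (Finsupp.graph_injective _ _ (congrArg Subtype.val h))))
    _ ≤ (#S + 1) ^ K := (Nat.card_eq_finsetCard _).trans_le (card_filter_powerset_card_le S K)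
    _ = ((n + 1) ^ 2 + 1) ^ K := by simp [S, sq]

lemma IsWilf.card_toFinset_mul_sq_le {n : ℕ} {P : n.Partition} (hP : IsWilf P) (t : ℕ) :
    #P.parts.toFinset * t ^ 2 ≤ 2 * t ^ 3 + n := by
  classical
  set A := P.parts.toFinset
  have h_small_part : #{p ∈ A | p < t} ≤ t :=
    (card_le_card fun p hp => mem_range.2 (mem_filter.1 hp).2).trans_eq (card_range t)
  have h_small_count : #{p ∈ A | P.parts.count p < t} ≤ t :=
    (card_le_card_of_injOn (P.parts.count) (fun p hp => mem_range.2 (mem_filter.1 hp).2)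
      fun p hp q hq hpq => hP p (Multiset.mem_toFinset.1 (mem_filter.1 hp).1) q
        (Multiset.mem_toFinset.1 (mem_filter.1 hq).1) hpq).trans_eq (card_range t)
  have h_large : #{p ∈ A | t ≤ p ∧ t ≤ P.parts.count p} * t ^ 2 ≤ n := by
    calc #{p ∈ A | t ≤ p ∧ t ≤ P.parts.count p} * t ^ 2
        = ∑ _p ∈ {p ∈ A | t ≤ p ∧ t ≤ P.parts.count p}, t * t := by simp [sq]
      _ ≤ ∑ p ∈ {p ∈ A | t ≤ p ∧ t ≤ P.parts.count p}, P.parts.count p * p :=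
          sum_le_sum fun p hp => Nat.mul_le_mul (mem_filter.1 hp).2.2 (mem_filter.1 hp).2.1
      _ ≤ ∑ p ∈ A, P.parts.count p * p := sum_le_sum_of_subset (filter_subset _ _)
      _ = P.parts.sum := by rw [Finset.sum_multiset_count]; rfl
      _ = n := P.parts_sum
  have h_cover : #A ≤ #{p ∈ A | p < t} + #{p ∈ A | P.parts.count p < t}
      + #{p ∈ A | t ≤ p ∧ t ≤ P.parts.count p} := by
    refine (card_le_card fun p hp => ?_).trans ((card_union_le _ _).trans
      (Nat.add_le_add_right (card_union_le _ _) _))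
    simp only [mem_union, mem_filter, hp, true_and]
    omega
  nlinarith

lemma rpow_one_third_pow_three {z : ℝ} (hz : 0 ≤ z) : (z ^ ((1 : ℝ) / 3)) ^ 3 = z := by
  rw [one_div]
  exact_mod_cast Real.rpow_inv_natCast_pow hz (n := 3) (by norm_num)

lemma tendsto_natCast_rpow_one_third :
    Tendsto (fun n : ℕ => (n : ℝ) ^ ((1 : ℝ) / 3)) atTop atTop :=
  (tendsto_rpow_atTop (by norm_num)).comp tendsto_natCast_atTop_atTop

lemma tendsto_log_natCast : Tendsto (fun n : ℕ => log n) atTop atTop :=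
  Real.tendsto_log_atTop.comp tendsto_natCast_atTop_atTop

noncomputable def wilfRatio (n : ℕ) : ℝ :=
  log (wilfCount n) / ((n : ℝ) ^ ((1 : ℝ) / 3) * log n)

lemma eventually_wilfRatio_le : ∀ᶠ n : ℕ in atTop, wilfRatio n ≤ 48 := by
  filter_upwards [tendsto_natCast_rpow_one_third.eventually_ge_atTop 2, eventually_ge_atTop 2]
    with n hx hn
  set x := (n : ℝ) ^ ((1 : ℝ) / 3)
  have hx₃ : x ^ 3 = n := rpow_one_third_pow_three n.cast_nonneg
  have hn₂ : (2 : ℝ) ≤ n := by exact_mod_cast hn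
  set t := ⌊x⌋₊
  have ht : x / 2 ≤ t := by have := Nat.lt_floor_add_one x; linarith
  have ht₀ : 0 < t := Nat.floor_pos.2 (by linarith)
  have ht₃ : t ^ 3 ≤ n := by
    have : (t : ℝ) ^ 3 ≤ x ^ 3 := pow_le_pow_left₀ t.cast_nonneg (Nat.floor_le (by linarith)) 3
    exact_mod_cast this.trans hx₃.le
  set K := 3 * n / t ^ 2
  have hK : (K : ℝ) ≤ 12 * x := by
    calc (K : ℝ) ≤ 3 * n / (t : ℝ) ^ 2 := by
          exact_mod_cast Nat.cast_div_le (m := 3 * n) (n := t ^ 2)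
      _ ≤ 3 * x ^ 3 / (x / 2) ^ 2 := by rw [hx₃]; gcongr
      _ = 12 * x := by field_simp; ring
  have hcount : wilfCount n ≤ ((n + 1) ^ 2 + 1) ^ K := wilfCount_le_pow fun P hP =>
    (Nat.le_div_iff_mul_le (by positivity)).2 (by have := hP.card_toFinset_mul_sq_le t; omega)
  have hlog : log (wilfCount n) ≤ K * (4 * log n) := by
    rcases (wilfCount n).eq_zero_or_pos with h₀ | hpos
    · rw [h₀, Nat.cast_zero, Real.log_zero]
      have := Real.log_nonneg (by linarith : (1 : ℝ) ≤ n)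
      positivity
    calc log (wilfCount n) ≤ log ((((n + 1) ^ 2 + 1) ^ K : ℕ) : ℝ) :=
          Real.log_le_log (by exact_mod_cast hpos) (by exact_mod_cast hcount)
      _ = K * log (((n : ℝ) + 1) ^ 2 + 1) := by push_cast; rw [Real.log_pow]
      _ ≤ K * log ((n : ℝ) ^ 4) := by
          have : 4 ≤ (n : ℝ) ^ 2 := by nlinarith
          gcongr
          nlinarith [mul_le_mul_of_nonneg_right this (sq_nonneg (n : ℝ))]
      _ = K * (4 * log n) := by rw [Real.log_pow]; norm_num
  have hlogn : 0 < log n := Real.log_pos (by linarith)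
  rw [wilfRatio, div_le_iff₀ (by positivity)]
  nlinarith

lemma isCoboundedUnder_ge_wilfRatio : IsCoboundedUnder (· ≥ ·) atTop wilfRatio :=
  (isBoundedUnder_of_eventually_le eventually_wilfRatio_le).isCoboundedUnder_flip

lemma eventually_le_log_wilfCount {ε : ℝ} (hε : 0 < ε) (hεA : 3 * ε < (6 : ℝ) ^ ((1 : ℝ) / 3)) :
    ∀ᶠ n : ℕ in atTop, (((6 : ℝ) ^ ((1 : ℝ) / 3) - 3 * ε) * (n : ℝ) ^ ((1 : ℝ) / 3) - 2)
      * (log ε + log n / 3 - 2) ≤ log (wilfCount n) := by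
  set A := (6 : ℝ) ^ ((1 : ℝ) / 3)
  filter_upwards [tendsto_natCast_rpow_one_third.eventually_ge_atTop (2 / ε),
    tendsto_natCast_rpow_one_third.eventually_ge_atTop (2 / (A - 3 * ε)),
    tendsto_log_natCast.eventually_ge_atTop (3 * (2 - log ε)), eventually_gt_atTop 0]
    with n hx₁ hx₂ hlog hn
  set x := (n : ℝ) ^ ((1 : ℝ) / 3)
  have hεx : 2 ≤ ε * x := by rwa [div_le_iff₀' hε] at hx₁
  have hAx : 2 ≤ (A - 3 * ε) * x := by rwa [div_le_iff₀' (by linarith)] at hx₂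
  have hx₀ : 0 < x := by nlinarith
  set b := ⌊ε * x⌋₊
  have hb₁ : (b : ℝ) ≤ ε * x := Nat.floor_le (by positivity)
  have hb₂ : ε * x / 2 ≤ b := by have := Nat.lt_floor_add_one (ε * x); linarith
  have hlogb : log ε + log n / 3 - 2 ≤ log b - 1 := by
    have h := Real.log_le_log (by linarith) hb₂
    rw [Real.log_div (by linarith) two_ne_zero, Real.log_mul hε.ne' hx₀.ne',
      Real.log_rpow (Nat.cast_pos.2 hn)] at h
    have := Real.log_two_lt_d9
    norm_num at this
    linarith
  have hy : (A * x) ^ 3 ≤ 6 * n := by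
    rw [mul_pow, rpow_one_third_pow_three (by norm_num), rpow_one_third_pow_three n.cast_nonneg]
  calc ((A - 3 * ε) * x - 2) * (log ε + log n / 3 - 2) ≤ (A * x - 3 * b - 2) * (log b - 1) :=
        mul_le_mul (by linarith) hlogb (by linarith) (by linarith)
    _ ≤ log (wilfCount n) := mul_log_sub_one_le_log_wilfCount (by linarith) hy

lemma sub_le_liminf_wilfRatio {ε : ℝ} (hε : 0 < ε) (hεA : 3 * ε < (6 : ℝ) ^ ((1 : ℝ) / 3)) :
    (6 : ℝ) ^ ((1 : ℝ) / 3) / 3 - ε ≤ liminf wilfRatio atTop := by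
  set A := (6 : ℝ) ^ ((1 : ℝ) / 3)
  set g := fun n : ℕ => (A - 3 * ε - 2 / (n : ℝ) ^ ((1 : ℝ) / 3)) * (1 / 3 + (log ε - 2) / log n)
  have hg : Tendsto g atTop (𝓝 (A / 3 - ε)) := by
    have h₁ := (tendsto_const_nhds (x := (2 : ℝ))).div_atTop tendsto_natCast_rpow_one_third
    have h₂ := (tendsto_const_nhds (x := log ε - 2)).div_atTop tendsto_log_natCast
    convert (tendsto_const_nhds.sub h₁).mul (tendsto_const_nhds.add h₂) using 2
    ring
  have hle : ∀ᶠ n in atTop, g n ≤ wilfRatio n := by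
    filter_upwards [eventually_le_log_wilfCount hε hεA,
      tendsto_natCast_rpow_one_third.eventually_gt_atTop 0,
      tendsto_log_natCast.eventually_gt_atTop 0] with n h hx hlog
    rw [wilfRatio, le_div_iff₀ (by positivity)]
    refine (Eq.le ?_).trans h
    simp only [g]
    field_simp
    ring
  rw [← hg.liminf_eq]
  exact liminf_le_liminf hle hg.isBoundedUnder_ge isCoboundedUnder_ge_wilfRatio

theorem stmt5 :
    (6 : ℝ) ^ ((1 : ℝ) / 3) / 3 ≤
      Filter.liminf
        (fun n : ℕ => Real.log (wilfCount n) / ((n : ℝ) ^ ((1 : ℝ) / 3) * Real.log n))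
        Filter.atTop := by
  change _ ≤ liminf wilfRatio atTop
  have hA : 0 < (6 : ℝ) ^ ((1 : ℝ) / 3) := by positivity
  refine le_of_forall_sub_le fun ε hε => ?_
  have hε' := min_le_right ε ((6 : ℝ) ^ ((1 : ℝ) / 3) / 6)
  linarith [min_le_left ε ((6 : ℝ) ^ ((1 : ℝ) / 3) / 6),
    sub_le_liminf_wilfRatio (ε := min ε ((6 : ℝ) ^ ((1 : ℝ) / 3) / 6)) (lt_min hε (by positivity))
      (by linarith)]
end

section
/- For all positive integers n and r, the number f(n,r) of Wilf partitions of n with exactly r distinct parts satisfies f(n,r) ≤ p(n,r) · (max_{1 ≤ j ≤ n} d(j))^r, where p(n,r) is the number of partitions of n into exactly r parts and d(j) is the number of positive divisors of j. -/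
/-- `wilfCountR n r` is the number of Wilf partitions of `n` with exactly `r` distinct parts. -/
noncomputable def wilfCountR (n r : ℕ) : ℕ :=
  Nat.card {P : n.Partition // IsWilf P ∧ P.parts.toFinset.card = r}

/-- `partitionCount n r` is the number of partitions of `n` into exactly `r` parts. -/
noncomputable def partitionCount (n r : ℕ) : ℕ :=
  Nat.card {P : n.Partition // Multiset.card P.parts = r}

/-!
Group the copies of each distinct part `a` of multiplicity `m` into one block `a * m`. The blocks
form a partition of `n` into exactly as many parts as there were distinct parts, and the original
partition is recovered from the blocks once one knows, for each block, which of its divisors is the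
part `a`. Hence over each partition into `r` parts lie at most `(max_{j ≤ n} d(j))^r` partitions
with `r` distinct parts; Wilf partitions are among these.
-/

namespace Multiset

variable {α β : Type*}

theorem mem_sections_map_fst (M : Multiset (α × β)) (g : α → Multiset β)
    (hM : ∀ p ∈ M, p.2 ∈ g p.1) :
    M ∈ Sections ((M.map Prod.fst).map fun a => (g a).map (a, ·)) := by
  induction M using Multiset.induction_on with
  | empty => simp
  | cons p M ih =>
    simp only [map_cons, sections_cons, mem_bind, mem_map]
    exact ⟨p, ⟨p.2, hM p (mem_cons_self p M), rfl⟩, M,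
      ih fun q hq => hM q (mem_cons_of_mem hq), rfl⟩

end Multiset

namespace Nat.Partition

open Finset

variable {n : ℕ}

/-- Each distinct part `a` of multiplicity `m` gives the pair `(a * m, a)`: a block of the
partition `blocks P` together with the divisor of it that recovers the part. -/
def blockPairs (P : n.Partition) : Multiset (ℕ × ℕ) :=
  P.parts.toFinset.val.map fun a => (a * P.parts.count a, a)

theorem mem_blockPairs {P : n.Partition} {p : ℕ × ℕ} :
    p ∈ P.blockPairs ↔ p.2 ∈ P.parts ∧ p.1 = p.2 * P.parts.count p.2 := by
  simp only [blockPairs, Multiset.mem_map, Finset.mem_val, Multiset.mem_toFinset]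
  constructor
  · rintro ⟨a, ha, rfl⟩
    exact ⟨ha, rfl⟩
  · rintro ⟨hp, hp1⟩
    exact ⟨p.2, hp, by rw [← hp1]⟩

theorem snd_mem_divisors_of_mem_blockPairs {P : n.Partition} {p : ℕ × ℕ}
    (hp : p ∈ P.blockPairs) : p.2 ∈ p.1.divisors := by
  obtain ⟨hmem, hp1⟩ := mem_blockPairs.1 hp
  rw [Nat.mem_divisors, hp1]
  exact ⟨dvd_mul_right _ _, (Nat.mul_pos (P.parts_pos hmem) (Multiset.count_pos.2 hmem)).ne'⟩

theorem parts_le_of_blockPairs_eq {P Q : n.Partition} (h : P.blockPairs = Q.blockPairs) :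
    P.parts ≤ Q.parts := by
  refine Multiset.le_iff_count.2 fun a => ?_
  by_cases ha : a ∈ P.parts
  · have hQ : (a * P.parts.count a, a) ∈ Q.blockPairs := h ▸ mem_blockPairs.2 ⟨ha, rfl⟩
    exact (Nat.eq_of_mul_eq_mul_left (P.parts_pos ha) (mem_blockPairs.1 hQ).2).le
  · simp [Multiset.count_eq_zero_of_notMem ha]

theorem blockPairs_injective : Function.Injective (blockPairs (n := n)) := fun _ _ h =>
  Nat.Partition.ext (le_antisymm (parts_le_of_blockPairs_eq h) (parts_le_of_blockPairs_eq h.symm))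

theorem sum_map_fst_blockPairs (P : n.Partition) : (P.blockPairs.map Prod.fst).sum = n := by
  calc (P.blockPairs.map Prod.fst).sum = ∑ a ∈ P.parts.toFinset, P.parts.count a • a := by
        simp [blockPairs, Finset.sum, mul_comm]
    _ = n := by rw [← Finset.sum_multiset_count, P.parts_sum]

def blocks (P : n.Partition) : n.Partition where
  parts := P.blockPairs.map Prod.fst
  parts_pos := by
    simp only [Multiset.mem_map]
    rintro _ ⟨p, hp, rfl⟩
    exact Nat.pos_of_ne_zero (Nat.mem_divisors.1 (snd_mem_divisors_of_mem_blockPairs hp)).2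
  parts_sum := P.sum_map_fst_blockPairs

theorem card_blocks_parts (P : n.Partition) :
    Multiset.card P.blocks.parts = #P.parts.toFinset := by
  simp [blocks, blockPairs, Multiset.card_toFinset]

theorem card_divisors_le_sup {Q : n.Partition} {b : ℕ} (hb : b ∈ Q.parts) :
    #b.divisors ≤ (Icc 1 n).sup fun j => #j.divisors :=
  le_sup (f := fun j => #j.divisors) (mem_Icc.2 ⟨Q.parts_pos hb, Q.le_of_mem_parts hb⟩)

theorem card_filter_blocks_eq_le (Q : n.Partition) :
    #{P : n.Partition | P.blocks = Q} ≤
      ((Icc 1 n).sup fun j => #j.divisors) ^ Multiset.card Q.parts := by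
  have hmaps : Set.MapsTo blockPairs (({P | P.blocks = Q} : Finset n.Partition) : Set n.Partition)
      (Multiset.Sections (Q.parts.map fun b => b.divisors.val.map (b, ·))).toFinset := by
    intro P hP
    rw [mem_coe, mem_filter] at hP
    rw [mem_coe, Multiset.mem_toFinset, ← hP.2]
    exact Multiset.mem_sections_map_fst _ (fun b => b.divisors.val)
      fun p hp => snd_mem_divisors_of_mem_blockPairs hp
  calc #{P : n.Partition | P.blocks = Q}
      ≤ #(Multiset.Sections (Q.parts.map fun b => b.divisors.val.map (b, ·))).toFinset :=
        card_le_card_of_injOn _ hmaps blockPairs_injective.injOn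
    _ ≤ Multiset.card (Multiset.Sections (Q.parts.map fun b => b.divisors.val.map (b, ·))) :=
        Multiset.toFinset_card_le _
    _ = (Q.parts.map fun b => #b.divisors).prod := by
        simp [Multiset.card_sections, Multiset.map_map, Function.comp_def]
    _ ≤ ((Icc 1 n).sup fun j => #j.divisors) ^ Multiset.card Q.parts := by
        refine (Multiset.prod_le_pow_card _ _ ?_).trans_eq (by rw [Multiset.card_map])
        simp only [Multiset.mem_map]
        rintro _ ⟨b, hb, rfl⟩
        exact card_divisors_le_sup hb

theorem card_filter_card_toFinset_parts_le (n r : ℕ) :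
    #{P : n.Partition | #P.parts.toFinset = r} ≤
      #{P : n.Partition | Multiset.card P.parts = r} *
        ((Icc 1 n).sup fun j => #j.divisors) ^ r := by
  rw [mul_comm]
  refine card_le_mul_card_image_of_maps_to (f := blocks) ?_ _ fun Q hQ => ?_
  · intro P hP
    simp only [mem_filter, mem_univ, true_and] at hP ⊢
    rw [card_blocks_parts, hP]
  · rw [mem_filter] at hQ
    rw [← hQ.2]
    exact (card_le_card (filter_subset_filter _ (filter_subset _ _))).trans
      (card_filter_blocks_eq_le Q)

end Nat.Partition

theorem stmt6_general (n r : ℕ) :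
    wilfCountR n r ≤
      partitionCount n r * ((Finset.Icc 1 n).sup fun j => j.divisors.card) ^ r := by
  classical
  open Finset in
  calc wilfCountR n r ≤ #{P : n.Partition | #P.parts.toFinset = r} := by
        rw [wilfCountR, Nat.card_eq_fintype_card, Fintype.card_subtype]
        exact card_le_card (monotone_filter_right _ fun _ _ h => h.2)
    _ ≤ _ := by
        rw [partitionCount, Nat.card_eq_fintype_card, Fintype.card_subtype]
        exact Nat.Partition.card_filter_card_toFinset_parts_le n r

theorem stmt6 (n r : ℕ) (hn : 0 < n) (hr : 0 < r) :
    wilfCountR n r ≤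
      partitionCount n r * ((Finset.Icc 1 n).sup fun j => j.divisors.card) ^ r :=
  stmt6_general n r
end

section
/- There exists a constant C > 0 and an integer N such that for all n ≥ N and all positive integers r, the number f(n,r) of Wilf partitions of n with exactly r distinct parts satisfies f(n,r) ≤ p(n,r) · exp(C·r·(ln n)/(ln ln n)), where p(n,r) is the number of partitions of n into exactly r parts. -/
/-!
Merging the `m` copies of each distinct part `a` of a partition of `n` into one part `a * m`
gives a partition of `n` into `r` parts, where `r` is the number of distinct parts. The
original partition is recovered by choosing, for each merged part `q`, a factorisation
`q = a * m`; there are at most `d(q)` choices, so `f(n, r) ≤ p(n, r) * D^r` with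
`D = max_{k ≤ n} d(k)`. Finally `D ≤ exp (3 log n / log log n)` for large `n`: splitting the
primes of `k ≤ n` at `√(log n)`, the small ones contribute at most `(2 log n + 1)^√(log n)`
and the large ones at most `2^(2 log n / log log n)` to `d(k) = ∏ (e_p + 1)`.
-/

open Real Filter

namespace Nat.Partition

variable {n : ℕ}

def partCounts (P : n.Partition) : Multiset (ℕ × ℕ) :=
  P.parts.dedup.map fun a => (a, P.parts.count a)

theorem sum_replicate_partCounts (P : n.Partition) :
    (P.partCounts.map fun p => Multiset.replicate p.2 p.1).sum = P.parts := by
  have h := Multiset.toFinset_sum_count_nsmul_eq P.parts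
  simp only [Finset.sum_eq_multiset_sum, Multiset.nsmul_singleton] at h
  simpa [partCounts, Multiset.map_map, Function.comp_def] using h

theorem partCounts_injective : Function.Injective (partCounts : n.Partition → _) :=
  fun P Q h => Nat.Partition.ext <| by
    rw [← sum_replicate_partCounts P, ← sum_replicate_partCounts Q, h]

theorem mul_ne_zero_of_mem_partCounts {P : n.Partition} {p : ℕ × ℕ} (hp : p ∈ P.partCounts) :
    p.1 * p.2 ≠ 0 := by
  obtain ⟨a, ha, rfl⟩ := Multiset.mem_map.mp hp
  rw [Multiset.mem_dedup] at ha
  exact Nat.mul_ne_zero (P.parts_pos ha).ne' (Multiset.count_ne_zero.mpr ha)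

def mergeEqualParts (P : n.Partition) : n.Partition where
  parts := P.partCounts.map fun p => p.1 * p.2
  parts_pos hi := by
    obtain ⟨p, hp, rfl⟩ := Multiset.mem_map.mp hi
    exact Nat.pos_of_ne_zero (mul_ne_zero_of_mem_partCounts hp)
  parts_sum := by
    conv_rhs => rw [← P.parts_sum, Finset.sum_multiset_count]
    simp [partCounts, Multiset.map_map, Finset.sum_eq_multiset_sum, mul_comm]

theorem card_mergeEqualParts (P : n.Partition) :
    Multiset.card P.mergeEqualParts.parts = P.parts.toFinset.card := by
  simp [mergeEqualParts, partCounts, Finset.card]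

end Nat.Partition

theorem Multiset.mem_sections_divisorsAntidiagonal {T : Multiset (ℕ × ℕ)}
    (hT : ∀ p ∈ T, p.1 * p.2 ≠ 0) :
    T ∈ Sections ((T.map fun p => p.1 * p.2).map fun q => q.divisorsAntidiagonal.val) := by
  rw [mem_sections, rel_map_left, rel_map_left]
  refine (rel_eq.mpr rfl).mono fun p hp _ _ h => ?_
  subst h
  exact Nat.mem_divisorsAntidiagonal.mpr ⟨rfl, hT p hp⟩

noncomputable def maxDivisorCount (n : ℕ) : ℕ :=
  (Finset.Icc 1 n).sup fun k => k.divisors.card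

theorem card_sections_divisorsAntidiagonal_le {n : ℕ} (Q : n.Partition) :
    Multiset.card (Multiset.Sections (Q.parts.map fun q => q.divisorsAntidiagonal.val))
      ≤ maxDivisorCount n ^ Multiset.card Q.parts := by
  rw [Multiset.card_sections, Multiset.map_map]
  refine (Multiset.prod_le_pow_card _ _ fun d hd => ?_).trans_eq (by rw [Multiset.card_map])
  obtain ⟨q, hq, rfl⟩ := Multiset.mem_map.mp hd
  rw [Function.comp_apply, Finset.card_val, ← Nat.map_div_right_divisors, Finset.card_map]
  exact Finset.le_sup (f := fun k => k.divisors.card)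
    (Finset.mem_Icc.mpr ⟨Q.parts_pos hq, Nat.Partition.le_of_mem_parts hq⟩)

theorem card_partitions_toFinset_card_eq_le (n r : ℕ) :
    Nat.card {P : n.Partition // P.parts.toFinset.card = r}
      ≤ partitionCount n r * maxDivisorCount n ^ r := by
  classical
  set S := Finset.univ.filter fun Q : n.Partition => Multiset.card Q.parts = r
  set fiber := fun Q : n.Partition =>
    (Multiset.Sections (Q.parts.map fun q => q.divisorsAntidiagonal.val)).toFinset
  have hS : S.card = partitionCount n r := by
    simp [S, partitionCount, Nat.card_eq_fintype_card, Fintype.card_subtype]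
  calc Nat.card {P : n.Partition // P.parts.toFinset.card = r}
      = (Finset.univ.filter fun P : n.Partition => P.parts.toFinset.card = r).card := by
        rw [Nat.card_eq_fintype_card, Fintype.card_subtype]
    _ ≤ (S.biUnion fiber).card := by
        refine Finset.card_le_card_of_injOn Nat.Partition.partCounts (fun P hP => ?_)
          Nat.Partition.partCounts_injective.injOn
        have hP : P.parts.toFinset.card = r := (Finset.mem_filter.mp hP).2
        refine Finset.mem_biUnion.mpr ⟨P.mergeEqualParts, ?_, ?_⟩
        · simp [S, Nat.Partition.card_mergeEqualParts, hP]
        · exact Multiset.mem_toFinset.mpr (Multiset.mem_sections_divisorsAntidiagonal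
            fun _ => Nat.Partition.mul_ne_zero_of_mem_partCounts)
    _ ≤ ∑ Q ∈ S, (fiber Q).card := Finset.card_biUnion_le
    _ ≤ ∑ _Q ∈ S, maxDivisorCount n ^ r := Finset.sum_le_sum fun Q hQ => by
        rw [← (Finset.mem_filter.mp hQ).2]
        exact (Multiset.toFinset_card_le _).trans (card_sections_divisorsAntidiagonal_le Q)
    _ = partitionCount n r * maxDivisorCount n ^ r := by rw [Finset.sum_const, smul_eq_mul, hS]

theorem Nat.factorization_le_log_two {k : ℕ} (hk : k ≠ 0) (p : ℕ) :
    k.factorization p ≤ Nat.log 2 k := by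
  by_cases hp : p.Prime
  · exact Nat.le_log_of_pow_le one_lt_two
      ((Nat.pow_le_pow_left hp.two_le _).trans (Nat.ordProj_le p hk))
  · simp [Nat.factorization_eq_zero_of_not_prime k hp]

theorem Nat.prod_small_primeFactors_factorization_add_one_le {k : ℕ} (hk : k ≠ 0) (b : ℕ) :
    ∏ p ∈ k.primeFactors with p ≤ b, (k.factorization p + 1) ≤ (Nat.log 2 k + 1) ^ b := by
  have hcard : (k.primeFactors.filter (· ≤ b)).card ≤ b := by
    refine (Finset.card_le_card fun p hp => ?_).trans_eq (Nat.card_Icc 1 b)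
    rw [Finset.mem_filter] at hp
    exact Finset.mem_Icc.mpr ⟨(Nat.prime_of_mem_primeFactors hp.1).one_le, hp.2⟩
  exact (Finset.prod_le_pow_card _ _ _ fun p _ => by
      have := Nat.factorization_le_log_two hk p; omega).trans
    (Nat.pow_le_pow_right (Nat.succ_pos _) hcard)

theorem Nat.prod_large_primeFactors_factorization_add_one_le {k b : ℕ} (hk : k ≠ 0)
    (hb : 0 < b) :
    ∏ p ∈ k.primeFactors with ¬p ≤ b, (k.factorization p + 1) ≤ 2 ^ Nat.log (b + 1) k := by
  set T := k.primeFactors.filter fun p => ¬p ≤ b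
  have hsum : ∑ p ∈ T, k.factorization p ≤ Nat.log (b + 1) k := by
    refine Nat.le_log_of_pow_le (by omega) ?_
    calc (b + 1) ^ ∑ p ∈ T, k.factorization p
        = ∏ p ∈ T, (b + 1) ^ k.factorization p := (Finset.prod_pow_eq_pow_sum _ _ _).symm
      _ ≤ ∏ p ∈ T, p ^ k.factorization p :=
          Finset.prod_le_prod' fun p hp => Nat.pow_le_pow_left (by
            have := (Finset.mem_filter.mp hp).2; omega) _
      _ ≤ k := Nat.le_of_dvd (Nat.pos_of_ne_zero hk) <| by
          conv_rhs => rw [← Nat.prod_factorization_pow_eq_self hk]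
          exact Finset.prod_dvd_prod_of_subset _ _ _ (Finset.filter_subset _ _)
  calc ∏ p ∈ T, (k.factorization p + 1)
      ≤ ∏ p ∈ T, 2 ^ k.factorization p :=
        Finset.prod_le_prod' fun _ _ => Nat.lt_two_pow_self
    _ = 2 ^ ∑ p ∈ T, k.factorization p := Finset.prod_pow_eq_pow_sum _ _ _
    _ ≤ 2 ^ Nat.log (b + 1) k := Nat.pow_le_pow_right two_pos hsum

theorem Nat.card_divisors_le_pow_mul_pow {k b : ℕ} (hk : k ≠ 0) (hb : 0 < b) :
    k.divisors.card ≤ (Nat.log 2 k + 1) ^ b * 2 ^ Nat.log (b + 1) k := by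
  rw [Nat.card_divisors hk, ← Finset.prod_filter_mul_prod_filter_not _ (· ≤ b)]
  exact Nat.mul_le_mul (Nat.prod_small_primeFactors_factorization_add_one_le hk b)
    (Nat.prod_large_primeFactors_factorization_add_one_le hk hb)

theorem Real.pow_floor_sqrt_le_exp_div_log {x a : ℝ} (hx : 3 ≤ x)
    (hlog : 2 * log x ^ 2 ≤ √x) (ha₀ : 0 ≤ a) (ha : a ≤ 2 * x + 1) :
    a ^ ⌊√x⌋₊ ≤ exp (x / log x) := by
  have hx₀ : 0 < x := by linarith
  have hy : 0 < log x := Real.log_pos (by linarith)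
  have hx2 : exp (2 * log x) = x ^ 2 := by
    rw [mul_comm, Real.exp_mul, Real.exp_log hx₀]; norm_cast
  calc a ^ ⌊√x⌋₊ ≤ exp (2 * log x) ^ ⌊√x⌋₊ := by gcongr; nlinarith
    _ = exp (2 * log x * ⌊√x⌋₊) := by rw [← Real.exp_nat_mul]; ring_nf
    _ ≤ exp (2 * log x * √x) := by gcongr; exact Nat.floor_le (by positivity)
    _ ≤ exp (x / log x) := by
        gcongr
        rw [le_div_iff₀ hy]
        nlinarith [Real.mul_self_sqrt hx₀.le]

theorem Real.two_pow_le_exp_two_mul_div_log {x : ℝ} {L : ℕ} (hx : 3 ≤ x)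
    (h : L * log (⌊√x⌋₊ + 1) ≤ x) :
    (2 : ℝ) ^ L ≤ exp (2 * x / log x) := by
  have hx₀ : 0 < x := by linarith
  have hy : 0 < log x := Real.log_pos (by linarith)
  have hsqrt : log x / 2 ≤ log (⌊√x⌋₊ + 1) := by
    rw [← Real.log_sqrt hx₀.le]
    exact Real.log_le_log (by positivity) (Nat.lt_floor_add_one _).le
  have hL : (L : ℝ) ≤ 2 * x / log x := by
    rw [le_div_iff₀ hy]
    nlinarith
  calc (2 : ℝ) ^ L ≤ exp 1 ^ L := by gcongr; linarith [Real.add_one_le_exp 1]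
    _ ≤ exp (2 * x / log x) := by rw [← Real.exp_nat_mul, mul_one]; gcongr

theorem Nat.card_divisors_le_exp {n k : ℕ} (hk : k ≠ 0) (hkn : k ≤ n) (hn : 3 ≤ Real.log n)
    (hlog : 2 * Real.log (Real.log n) ^ 2 ≤ √(Real.log n)) :
    (k.divisors.card : ℝ) ≤ exp (3 * Real.log n / Real.log (Real.log n)) := by
  set x := Real.log n
  have hb : 0 < ⌊√x⌋₊ := Nat.floor_pos.mpr (Real.one_le_sqrt.mpr (by linarith))
  have hpow {m L : ℕ} (hm : 0 < m) (h : m ^ L ≤ k) : (L : ℝ) * Real.log m ≤ x := by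
    rw [← Real.log_pow]
    exact Real.log_le_log (by positivity) (by exact_mod_cast h.trans hkn)
  have hlog2 : (Nat.log 2 k : ℝ) ≤ 2 * x := by
    have := hpow two_pos (Nat.pow_log_le_self 2 hk)
    push_cast at this
    nlinarith [Real.log_two_gt_d9]
  have hlogb := hpow (Nat.succ_pos _) (Nat.pow_log_le_self (⌊√x⌋₊ + 1) hk)
  push_cast at hlogb
  calc (k.divisors.card : ℝ)
      ≤ ((Nat.log 2 k : ℝ) + 1) ^ ⌊√x⌋₊ * 2 ^ Nat.log (⌊√x⌋₊ + 1) k := by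
        exact_mod_cast Nat.card_divisors_le_pow_mul_pow hk hb
    _ ≤ exp (x / Real.log x) * exp (2 * x / Real.log x) := by
        gcongr
        · exact Real.pow_floor_sqrt_le_exp_div_log hn hlog (by positivity) (by linarith)
        · exact Real.two_pow_le_exp_two_mul_div_log hn hlogb
    _ = exp (3 * x / Real.log x) := by rw [← Real.exp_add]; ring_nf

theorem eventually_two_mul_log_sq_le_sqrt : ∀ᶠ x : ℝ in atTop, 2 * log x ^ 2 ≤ √x := by
  filter_upwards [(isLittleO_log_rpow_rpow_atTop 2 one_half_pos).bound
    (by norm_num : (0 : ℝ) < 2⁻¹), eventually_ge_atTop 1] with x hx hx1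
  have hlog : 0 ≤ log x := Real.log_nonneg hx1
  rw [Real.norm_of_nonneg (by positivity), Real.norm_of_nonneg (by positivity),
    ← Real.sqrt_eq_rpow, Real.rpow_two] at hx
  linarith

theorem eventually_maxDivisorCount_le :
    ∀ᶠ n : ℕ in atTop, (maxDivisorCount n : ℝ) ≤ exp (3 * log n / log (log n)) := by
  have hlog : Tendsto (fun n : ℕ => log n) atTop atTop :=
    tendsto_log_atTop.comp tendsto_natCast_atTop_atTop
  filter_upwards [hlog.eventually (eventually_ge_atTop 3),
    hlog.eventually eventually_two_mul_log_sq_le_sqrt] with n hn hsq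
  refine (Nat.cast_le.mpr (Finset.sup_le fun k hk => Nat.le_floor ?_)).trans
    (Nat.floor_le (exp_pos _).le)
  obtain ⟨hk1, hkn⟩ := Finset.mem_Icc.mp hk
  exact Nat.card_divisors_le_exp (by omega) hkn hn hsq

theorem wilfCountR_le_card_partitions (n r : ℕ) :
    wilfCountR n r ≤ Nat.card {P : n.Partition // P.parts.toFinset.card = r} :=
  Nat.card_le_card_of_injective (fun P => ⟨P.1, P.2.2⟩) fun _ _ h =>
    Subtype.ext (congrArg Subtype.val h :)

theorem stmt7 :
    ∃ C : ℝ, 0 < C ∧ ∃ N : ℕ, ∀ n : ℕ, N ≤ n → ∀ r : ℕ, 0 < r →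
      (wilfCountR n r : ℝ) ≤
        (partitionCount n r : ℝ) *
          Real.exp (C * r * Real.log n / Real.log (Real.log n)) := by
  obtain ⟨N, hN⟩ := eventually_atTop.mp eventually_maxDivisorCount_le
  refine ⟨3, three_pos, N, fun n hn r _ => ?_⟩
  calc (wilfCountR n r : ℝ)
      ≤ partitionCount n r * (maxDivisorCount n : ℝ) ^ r := by
        exact_mod_cast (wilfCountR_le_card_partitions n r).trans
          (card_partitions_toFinset_card_eq_le n r)
    _ ≤ partitionCount n r * exp (3 * log n / log (log n)) ^ r := by gcongr; exact hN n hn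
    _ = partitionCount n r * exp (3 * r * log n / log (log n)) := by
        rw [← Real.exp_nat_mul]; ring_nf
end

section
/- For every real constant c > 0 there exists a constant A > 0 such that for all positive integers n and all integers r with 1 ≤ r ≤ (c·n)^{1/3}, the number p(n,r) of partitions of n into exactly r parts satisfies p(n,r) ≤ A · n^{r-1} / (r!·(r-1)!). -/
open Finset

def simplexLatticePoints {k : ℕ} (c : Fin k → ℕ) (m : ℕ) : Finset (Fin k → ℕ) :=
  {f ∈ Fintype.piFinset fun _ => range (m + 1) | ∑ j, c j * f j ≤ m}

theorem mem_simplexLatticePoints {k : ℕ} {c : Fin k → ℕ} (hc : ∀ j, 0 < c j) {m : ℕ}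
    {f : Fin k → ℕ} : f ∈ simplexLatticePoints c m ↔ ∑ j, c j * f j ≤ m := by
  refine ⟨fun hf => (mem_filter.mp hf).2, fun hf => mem_filter.mpr ⟨?_, hf⟩⟩
  refine Fintype.mem_piFinset.mpr fun j => mem_range_succ_iff.mpr ?_
  calc f j ≤ c j * f j := Nat.le_mul_of_pos_left _ (hc j)
    _ ≤ ∑ j, c j * f j :=
        single_le_sum (f := fun j => c j * f j) (fun _ _ => Nat.zero_le _) (mem_univ j)
    _ ≤ m := hf

theorem pow_succ_add_mul_pow_le (x c k : ℕ) :
    x ^ (k + 1) + (k + 1) * c * x ^ k ≤ (x + c) ^ (k + 1) := by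
  induction k with
  | zero => simp
  | succ k ih =>
    calc x ^ (k + 2) + (k + 2) * c * x ^ (k + 1)
        ≤ x ^ (k + 2) + (k + 2) * c * x ^ (k + 1) + (k + 1) * c ^ 2 * x ^ k :=
          Nat.le_add_right _ _
      _ = (x + c) * (x ^ (k + 1) + (k + 1) * c * x ^ k) := by ring
      _ ≤ (x + c) * (x + c) ^ (k + 1) := Nat.mul_le_mul_left _ ih
      _ = (x + c) ^ (k + 2) := by ring

theorem sum_range_succ_mul_pow_le (a c k N : ℕ) :
    ∑ u ∈ range N, (k + 1) * c * (a + c * u) ^ k ≤ (a + c * N) ^ (k + 1) := by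
  induction N with
  | zero => simp
  | succ N ih =>
    calc ∑ u ∈ range (N + 1), (k + 1) * c * (a + c * u) ^ k
        ≤ (a + c * N) ^ (k + 1) + (k + 1) * c * (a + c * N) ^ k := by
          rw [sum_range_succ]; exact Nat.add_le_add_right ih _
      _ ≤ (a + c * N + c) ^ (k + 1) := pow_succ_add_mul_pow_le _ _ _
      _ = (a + c * (N + 1)) ^ (k + 1) := by ring

theorem sum_range_div_succ_mul_pow_le (m c b k : ℕ) :
    ∑ v ∈ range (m / c + 1), (k + 1) * c * (m - c * v + b) ^ k ≤ (m + c + b) ^ (k + 1) := by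
  have hm := Nat.mod_add_div m c
  rw [← sum_range_reflect]
  calc ∑ u ∈ range (m / c + 1), (k + 1) * c * (m - c * (m / c + 1 - 1 - u) + b) ^ k
      = ∑ u ∈ range (m / c + 1), (k + 1) * c * (m % c + b + c * u) ^ k := by
        refine sum_congr rfl fun u hu => ?_
        have hmul : c * (m / c - u) + c * u = c * (m / c) := by
          rw [← Nat.mul_add, Nat.sub_add_cancel (mem_range_succ_iff.mp hu)]
        rw [Nat.add_sub_cancel]
        congr 2
        omega
    _ ≤ (m % c + b + c * (m / c + 1)) ^ (k + 1) := sum_range_succ_mul_pow_le _ _ _ _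
    _ = (m + c + b) ^ (k + 1) := by
        rw [Nat.mul_succ]
        congr 1
        omega

theorem card_simplexLatticePoints_mul_le {k : ℕ} (c : Fin k → ℕ) (hc : ∀ j, 0 < c j)
    (m : ℕ) :
    #(simplexLatticePoints c m) * k.factorial * ∏ j, c j ≤ (m + ∑ j, c j) ^ k := by
  induction k generalizing m with
  | zero => simp [simplexLatticePoints]
  | succ k ih =>
    have htail : ∀ j, 0 < Fin.tail c j := fun j => hc j.succ
    have hsub : simplexLatticePoints c m ⊆ (range (m / c 0 + 1)).biUnion fun v =>
        (simplexLatticePoints (Fin.tail c) (m - c 0 * v)).image (Fin.cons v) := by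
      intro f hf
      rw [mem_simplexLatticePoints hc, Fin.sum_univ_succ] at hf
      simp only [mem_biUnion, mem_image, mem_range_succ_iff]
      refine ⟨f 0, ?_, Fin.tail f, ?_, Fin.cons_self_tail f⟩
      · rw [Nat.le_div_iff_mul_le (hc 0), mul_comm]
        omega
      · rw [mem_simplexLatticePoints htail]
        change ∑ j : Fin k, c j.succ * f j.succ ≤ m - c 0 * f 0
        omega
    have hcard : #(simplexLatticePoints c m) ≤
        ∑ v ∈ range (m / c 0 + 1), #(simplexLatticePoints (Fin.tail c) (m - c 0 * v)) :=
      (card_le_card hsub).trans (card_biUnion_le.trans (sum_le_sum fun _ _ => card_image_le))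
    calc #(simplexLatticePoints c m) * (k + 1).factorial * ∏ j, c j
        = #(simplexLatticePoints c m) *
            ((k + 1) * c 0 * (k.factorial * ∏ j : Fin k, c j.succ)) := by
          rw [Fin.prod_univ_succ, Nat.factorial_succ]; ring
      _ ≤ ∑ v ∈ range (m / c 0 + 1), (k + 1) * c 0 *
            (#(simplexLatticePoints (Fin.tail c) (m - c 0 * v)) * k.factorial *
              ∏ j : Fin k, c j.succ) := by
          refine (Nat.mul_le_mul_right _ hcard).trans_eq ?_
          rw [sum_mul]
          exact sum_congr rfl fun _ _ => by ring
      _ ≤ ∑ v ∈ range (m / c 0 + 1),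
            (k + 1) * c 0 * (m - c 0 * v + ∑ j : Fin k, c j.succ) ^ k :=
          sum_le_sum fun v _ => Nat.mul_le_mul_left _ (ih _ htail _)
      _ ≤ (m + c 0 + ∑ j : Fin k, c j.succ) ^ (k + 1) := sum_range_div_succ_mul_pow_le _ _ _ _
      _ = (m + ∑ j, c j) ^ (k + 1) := by rw [Fin.sum_univ_succ, add_assoc]

theorem List.getD_eq_getD_zero_add_sum {l : List ℕ} (hl : l.Pairwise (· ≤ ·)) {i : ℕ}
    (hi : i < l.length) :
    l.getD i 0 = l.getD 0 0 + ∑ j ∈ Finset.range i, (l.getD (j + 1) 0 - l.getD j 0) := by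
  induction i with
  | zero => simp
  | succ i ih =>
    have hle : l.getD i 0 ≤ l.getD (i + 1) 0 := by
      rw [List.getD_eq_getElem _ _ (by omega), List.getD_eq_getElem _ _ hi]
      exact List.pairwise_iff_getElem.mp hl i (i + 1) _ _ (by omega)
    rw [Finset.sum_range_succ]
    have := ih (by omega)
    omega

theorem List.sum_eq_sum_range_getD (l : List ℕ) :
    l.sum = ∑ i ∈ Finset.range l.length, l.getD i 0 := by
  induction l with
  | nil => simp
  | cons a l ih =>
    rw [List.sum_cons, ih, List.length_cons, Finset.sum_range_succ']
    simp [add_comm]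

theorem sum_range_sum_range_succ (g : ℕ → ℕ) (r : ℕ) :
    ∑ i ∈ range r, ∑ j ∈ range (i + 1), g j = ∑ j ∈ range r, (r - j) * g j := by
  induction r with
  | zero => simp
  | succ r ih =>
    have hsplit : ∑ j ∈ range r, (r + 1 - j) * g j =
        ∑ j ∈ range r, (r - j) * g j + ∑ j ∈ range r, g j := by
      rw [← sum_add_distrib]
      refine sum_congr rfl fun j hj => ?_
      rw [Nat.sub_add_comm (mem_range.mp hj).le, Nat.succ_mul]
    rw [sum_range_succ (fun i => ∑ j ∈ range (i + 1), g j), ih,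
      sum_range_succ (fun j => (r + 1 - j) * g j), hsplit, sum_range_succ g]
    simp only [Nat.add_sub_cancel_left, one_mul]
    ring

namespace Nat.Partition

variable {n : ℕ}

/-- The parts in increasing order after a sentinel `1`, which makes `gap 0` the smallest part
minus one. -/
def ascParts (P : n.Partition) : List ℕ := 1 :: P.parts.sort

def gap (P : n.Partition) (j : ℕ) : ℕ := P.ascParts.getD (j + 1) 0 - P.ascParts.getD j 0

theorem getD_ascParts {P : n.Partition} {i : ℕ} (hi : i ≤ Multiset.card P.parts) :
    P.ascParts.getD i 0 = 1 + ∑ j ∈ range i, P.gap j := by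
  have hsorted : P.ascParts.Pairwise (· ≤ ·) := List.pairwise_cons.mpr
    ⟨fun a ha => P.parts_pos ((Multiset.mem_sort _).mp ha), Multiset.pairwise_sort _ _⟩
  refine List.getD_eq_getD_zero_add_sum hsorted ?_
  simp only [ascParts, List.length_cons, Multiset.length_sort]
  omega

theorem card_add_sum_gap (P : n.Partition) :
    Multiset.card P.parts +
      ∑ j ∈ range (Multiset.card P.parts), (Multiset.card P.parts - j) * P.gap j = n := by
  set r := Multiset.card P.parts
  calc r + ∑ j ∈ range r, (r - j) * P.gap j
      = ∑ i ∈ range r, (1 + ∑ j ∈ range (i + 1), P.gap j) := by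
        rw [sum_add_distrib, sum_range_sum_range_succ, sum_const, card_range, smul_eq_mul,
          mul_one]
    _ = ∑ i ∈ range r, P.ascParts.getD (i + 1) 0 :=
        sum_congr rfl fun i hi => (getD_ascParts (mem_range.mp hi)).symm
    _ = P.parts.sum := by
        conv_rhs => rw [← Multiset.sort_eq P.parts (· ≤ ·)]
        rw [Multiset.sum_coe, List.sum_eq_sum_range_getD, Multiset.length_sort]
        rfl
    _ = n := P.parts_sum

theorem card_add_sum_gap_of_card_eq_succ {k : ℕ} {P : n.Partition}
    (hP : Multiset.card P.parts = k + 1) :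
    k + 1 + (∑ j ∈ range k, (k + 1 - j) * P.gap j + P.gap k) = n := by
  have h := P.card_add_sum_gap
  rwa [hP, sum_range_succ, Nat.add_sub_cancel_left, one_mul] at h

theorem eq_of_gap_eq {P Q : n.Partition} (hcard : Multiset.card P.parts = Multiset.card Q.parts)
    (hgap : ∀ j < Multiset.card P.parts, P.gap j = Q.gap j) : P = Q := by
  have hasc : P.ascParts = Q.ascParts := by
    refine List.ext_getElem (by simp [ascParts, hcard]) fun i hP hQ => ?_
    have hi : i ≤ Multiset.card P.parts := by simpa [ascParts, Nat.lt_succ_iff] using hP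
    rw [← List.getD_eq_getElem _ 0, ← List.getD_eq_getElem _ 0, getD_ascParts hi,
      getD_ascParts (hcard ▸ hi)]
    exact congrArg _ (sum_congr rfl fun j hj => hgap j ((mem_range.mp hj).trans_le hi))
  ext1
  rw [← Multiset.sort_eq P.parts (· ≤ ·), ← Multiset.sort_eq Q.parts (· ≤ ·),
    (List.cons.inj hasc).2]

end Nat.Partition

theorem partitionCount_succ_le_card (n k : ℕ) :
    partitionCount n (k + 1) ≤
      #(simplexLatticePoints (fun j : Fin k => k + 1 - j) (n - (k + 1))) := by
  classical
  rw [partitionCount, Nat.card_eq_fintype_card, Fintype.card_subtype]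
  refine card_le_card_of_injOn (fun P j => P.gap j) (fun P hP => ?_) (fun P hP Q hQ hPQ => ?_)
  · have h := Nat.Partition.card_add_sum_gap_of_card_eq_succ (mem_filter.mp hP).2
    rw [mem_coe, mem_simplexLatticePoints (fun j => by omega),
      Fin.sum_univ_eq_sum_range (fun j => (k + 1 - j) * P.gap j)]
    omega
  · have hP := (mem_filter.mp hP).2
    have hQ := (mem_filter.mp hQ).2
    have hlt : ∀ j < k, P.gap j = Q.gap j := fun j hj => congrFun hPQ ⟨j, hj⟩
    have hsum :
        ∑ j ∈ range k, (k + 1 - j) * P.gap j = ∑ j ∈ range k, (k + 1 - j) * Q.gap j :=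
      sum_congr rfl fun j hj => by rw [hlt j (mem_range.mp hj)]
    have hPk := Nat.Partition.card_add_sum_gap_of_card_eq_succ hP
    have hQk := Nat.Partition.card_add_sum_gap_of_card_eq_succ hQ
    refine Nat.Partition.eq_of_gap_eq (hP.trans hQ.symm) fun j hj => ?_
    rcases (Nat.lt_succ_iff.mp (hP ▸ hj)).lt_or_eq with hj | rfl
    · exact hlt j hj
    · omega

theorem prod_fin_succ_sub_eq_factorial (k : ℕ) :
    ∏ j : Fin k, (k + 1 - j) = (k + 1).factorial := by
  rw [Fin.prod_univ_eq_prod_range (fun j => k + 1 - j), ← Nat.descFactorial_eq_prod_range,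
    ← Nat.factorial_mul_descFactorial (Nat.le_add_right k 1), Nat.add_sub_cancel_left,
    Nat.factorial_one, one_mul]

theorem partitionCount_succ_mul_factorial_le (n k : ℕ) :
    partitionCount n (k + 1) * (k.factorial * (k + 1).factorial) ≤ (n + (k + 1) ^ 2) ^ k := by
  have hcount := card_simplexLatticePoints_mul_le (fun j : Fin k => k + 1 - j)
    (fun j => by omega) (n - (k + 1))
  rw [prod_fin_succ_sub_eq_factorial] at hcount
  have hsum : ∑ j : Fin k, (k + 1 - (j : ℕ)) ≤ (k + 1) ^ 2 :=
    calc ∑ j : Fin k, (k + 1 - (j : ℕ)) ≤ ∑ _j : Fin k, (k + 1) :=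
          sum_le_sum fun j _ => Nat.sub_le _ _
      _ = k * (k + 1) := by simp
      _ ≤ (k + 1) ^ 2 := by nlinarith
  calc partitionCount n (k + 1) * (k.factorial * (k + 1).factorial)
      ≤ #(simplexLatticePoints (fun j : Fin k => k + 1 - j) (n - (k + 1))) * k.factorial *
          (k + 1).factorial := by
        rw [← mul_assoc]; gcongr; exact partitionCount_succ_le_card n k
    _ ≤ (n - (k + 1) + ∑ j : Fin k, (k + 1 - (j : ℕ))) ^ k := hcount
    _ ≤ (n + (k + 1) ^ 2) ^ k := Nat.pow_le_pow_left (Nat.add_le_add (Nat.sub_le _ _) hsum) k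

theorem add_pow_le_pow_mul_exp {a b : ℝ} (ha : 0 < a) (hb : 0 ≤ b) (k : ℕ) :
    (a + b) ^ k ≤ a ^ k * Real.exp (k * b / a) := by
  have hab : a + b ≤ a * Real.exp (b / a) :=
    calc a + b = a * (b / a + 1) := by field_simp; ring
      _ ≤ a * Real.exp (b / a) := by gcongr; exact Real.add_one_le_exp _
  calc (a + b) ^ k ≤ (a * Real.exp (b / a)) ^ k := by gcongr
    _ = a ^ k * Real.exp (k * b / a) := by rw [mul_pow, ← Real.exp_nat_mul, mul_div_assoc]

theorem stmt8 (c : ℝ) (hc : 0 < c) :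
    ∃ A : ℝ, 0 < A ∧ ∀ n : ℕ, 0 < n → ∀ r : ℕ, 1 ≤ r →
      (r : ℝ) ≤ (c * n) ^ ((1 : ℝ) / 3) →
        (partitionCount n r : ℝ) ≤
          A * (n : ℝ) ^ (r - 1) / ((r.factorial : ℝ) * ((r - 1).factorial : ℝ)) := by
  refine ⟨Real.exp c, Real.exp_pos c, fun n hn r hr hrc => ?_⟩
  obtain ⟨k, rfl⟩ : ∃ k, r = k + 1 := ⟨r - 1, by omega⟩
  have hn : (0 : ℝ) < n := by exact_mod_cast hn
  have hcube : ((k : ℝ) + 1) ^ 3 ≤ c * n :=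
    calc ((k : ℝ) + 1) ^ 3 ≤ ((c * n) ^ ((1 : ℝ) / 3)) ^ 3 := by gcongr; exact_mod_cast hrc
      _ = c * n := by rw [one_div]; exact Real.rpow_inv_natCast_pow (by positivity) (by norm_num)
  have hexponent : k * ((k : ℝ) + 1) ^ 2 / n ≤ c := by
    rw [div_le_iff₀ hn]; nlinarith
  have hcount : (partitionCount n (k + 1) : ℝ) * (k.factorial * (k + 1).factorial)
      ≤ (n + ((k : ℝ) + 1) ^ 2) ^ k := by
    exact_mod_cast partitionCount_succ_mul_factorial_le n k
  rw [Nat.add_sub_cancel, le_div_iff₀ (by positivity), mul_comm ((k + 1).factorial : ℝ)]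
  calc (partitionCount n (k + 1) : ℝ) * (k.factorial * (k + 1).factorial)
      ≤ (n + ((k : ℝ) + 1) ^ 2) ^ k := hcount
    _ ≤ n ^ k * Real.exp c := (add_pow_le_pow_mul_exp hn (by positivity) k).trans (by gcongr)
    _ = Real.exp c * n ^ k := mul_comm _ _
end

section
/- The swap map σ is an involution on the set of Wilf partitions of n: for every Wilf partition P of n, applying the swap twice returns P, i.e., σ(σ(P)) = P. -/
/-- Swapping parts and multiplicities: for each distinct element `p` of `s`, include
`p` copies of the multiplicity of `p` in `s`. -/
def swapMultiset (s : Multiset ℕ) : Multiset ℕ :=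
  s.dedup.bind fun p => Multiset.replicate p (Multiset.count p s)

/-
Write `m(p)` for the multiplicity of the part `p`. The swap contains the part `m(p)` with
multiplicity `p`. Since `m` is injective on the (positive) parts of a Wilf partition, these parts
`m(p)` are pairwise distinct, so the swap is again Wilf and its multiplicity function is the
inverse of `m`; swapping once more gives back each part `p` with multiplicity `m(p)`.
-/

namespace Multiset

variable {s : Multiset ℕ}

theorem count_swapMultiset (s : Multiset ℕ) (a : ℕ) :
    count a (swapMultiset s) = ∑ q ∈ s.toFinset, if count q s = a then q else 0 := by
  simp only [swapMultiset, count_bind, count_replicate, Finset.sum, toFinset_val]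

theorem mem_swapMultiset {a : ℕ} : a ∈ swapMultiset s ↔ ∃ p ∈ s, p ≠ 0 ∧ count p s = a := by
  simp only [swapMultiset, mem_bind, mem_dedup, mem_replicate, eq_comm (a := a)]

theorem count_swapMultiset_eq_zero {a : ℕ} (ha : ∀ p ∈ s, count p s ≠ a) :
    count a (swapMultiset s) = 0 := by
  rw [count_swapMultiset]
  exact Finset.sum_eq_zero fun q hq => if_neg (ha q (mem_toFinset.mp hq))

theorem count_count_swapMultiset (hs : Set.InjOn (count · s) {p | p ∈ s}) {p : ℕ}
    (hp : p ∈ s) : count (count p s) (swapMultiset s) = p := by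
  rw [count_swapMultiset, Finset.sum_eq_single_of_mem p (mem_toFinset.mpr hp) fun q hq hqp =>
    if_neg fun h => hqp (hs (mem_toFinset.mp hq) hp h)]
  exact if_pos rfl

theorem injOn_count_swapMultiset (hs : Set.InjOn (count · s) {p | p ∈ s}) :
    Set.InjOn (count · (swapMultiset s)) {a | a ∈ swapMultiset s} := by
  rintro _ ha _ hb hab
  obtain ⟨p, hp, -, rfl⟩ := mem_swapMultiset.mp ha
  obtain ⟨q, hq, -, rfl⟩ := mem_swapMultiset.mp hb
  simp only [count_count_swapMultiset hs hp, count_count_swapMultiset hs hq] at hab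
  rw [hab]

theorem swapMultiset_swapMultiset (h0 : 0 ∉ s) (hs : Set.InjOn (count · s) {p | p ∈ s}) :
    swapMultiset (swapMultiset s) = s := by
  ext a
  by_cases ha : a ∈ s
  · have hm : count a s ∈ swapMultiset s :=
      mem_swapMultiset.mpr ⟨a, ha, ne_of_mem_of_not_mem ha h0, rfl⟩
    conv_lhs => rw [← count_count_swapMultiset hs ha]
    exact count_count_swapMultiset (injOn_count_swapMultiset hs) hm
  · rw [count_eq_zero.mpr ha]
    refine count_swapMultiset_eq_zero fun q hq => ?_
    obtain ⟨p, hp, -, rfl⟩ := mem_swapMultiset.mp hq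
    rw [count_count_swapMultiset hs hp]
    exact ne_of_mem_of_not_mem hp ha

end Multiset

theorem stmt11_general (n : ℕ) (P : n.Partition) (hP : IsWilf P) :
    swapMultiset (swapMultiset P.parts) = P.parts :=
  Multiset.swapMultiset_swapMultiset (fun h => (P.parts_pos h).false) hP

theorem stmt11 (n : ℕ) (hn : 0 < n) (P : n.Partition) (hP : IsWilf P) :
    swapMultiset (swapMultiset P.parts) = P.parts :=
  stmt11_general n P hP
end

section
/- Let 0 < ε < 1/2 and set a = (6(1 − 2ε))^{1/3}. There exists an integer K₀ such that for every integer K ≥ K₀ there exists N such that for all integers n ≥ N the following holds: with b = ⌊a·n^{1/3}/K⌋ and I_j = {(j−1)b+1, (j−1)b+2, …, jb} for j = 1, …, K, every bijection p of {1, 2, …, Kb} onto itself satisfying p(I_j) ⊆ I_{K+1−j} for all j ∈ {1, …, K} satisfies ∑_{i=1}^{Kb} i·p(i) < (1 − ε)·n. -/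
/-! If `i ∈ I_j` then `p i ∈ I_{K+1-j}`, so `i * p i ≤ jb * (K+1-j)b`. Summing over the `K` blocks
of size `b` gives `∑ i * p i ≤ b³ ∑ j (K+1-j) = b³ K(K+1)(K+2)/6`, and `b³K³ ≤ a³n = 6(1-2ε)n`
turns this into `(1-2ε)(K+1)(K+2)/K² * n`, which is below `(1-ε)n` as soon as `εK ≥ 6`. -/

open Finset

def block (b j : ℕ) : Finset ℕ := Icc ((j - 1) * b + 1) (j * b)

lemma card_block (b : ℕ) {j : ℕ} (hj : 1 ≤ j) : #(block b j) = b := by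
  obtain ⟨m, rfl⟩ := Nat.exists_eq_add_of_le' hj
  simp [block, add_mul]

lemma sum_Icc_mul_eq_sum_blocks {M : Type*} [AddCommMonoid M] (f : ℕ → M) (K b : ℕ) :
    ∑ i ∈ Icc 1 (K * b), f i = ∑ j ∈ Icc 1 K, ∑ i ∈ block b j, f i := by
  induction K with
  | zero => simp
  | succ K ih =>
    rw [sum_Icc_succ_top (by omega), ← ih]
    simp only [block, Icc_add_one_left_eq_Ioc, add_tsub_cancel_right]
    exact (sum_Ioc_consecutive f (Nat.zero_le _) (Nat.mul_le_mul_right b K.le_succ)).symm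

lemma sum_Icc_mul_sub (x : ℝ) (K : ℕ) :
    ∑ j ∈ Icc 1 K, (j : ℝ) * (x - j) = x * K * (K + 1) / 2 - K * (K + 1) * (2 * K + 1) / 6 := by
  induction K with
  | zero => simp
  | succ K ih => rw [sum_Icc_succ_top (by omega), ih]; push_cast; ring

lemma sum_Icc_mul_add_one_sub (K : ℕ) :
    ∑ j ∈ Icc 1 K, (j : ℝ) * (K + 1 - j) = K * (K + 1) * (K + 2) / 6 := by
  rw [sum_Icc_mul_sub]; ring

lemma natFloor_cbrt_div_pow_three_mul_le {t K : ℝ} (ht : 0 ≤ t) (hK : 0 < K) :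
    (⌊t ^ (1 / 3 : ℝ) / K⌋₊ : ℝ) ^ 3 * K ^ 3 ≤ t := by
  have hy : 0 ≤ t ^ (1 / 3 : ℝ) / K := by positivity
  calc (⌊t ^ (1 / 3 : ℝ) / K⌋₊ : ℝ) ^ 3 * K ^ 3 ≤ (t ^ (1 / 3 : ℝ) / K) ^ 3 * K ^ 3 := by
        gcongr; exact Nat.floor_le hy
    _ = t := by
      rw [div_pow, div_mul_cancel₀ _ (by positivity), one_div]
      exact_mod_cast Real.rpow_inv_natCast_pow ht three_ne_zero

lemma one_sub_two_mul_mul_lt {ε K : ℝ} (hε : 0 < ε) (hεK : 6 ≤ ε * K) :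
    (1 - 2 * ε) * ((K + 1) * (K + 2)) < (1 - ε) * K ^ 2 := by
  have hK : 0 < K := pos_of_mul_pos_right (by linarith) hε.le
  nlinarith

lemma sum_block_mul_le {b j m : ℕ} (hj : 1 ≤ j) (p : ℕ → ℕ) (hp : ∀ i ∈ block b j, p i ≤ m) :
    ∑ i ∈ block b j, (i : ℝ) * p i ≤ b * ((j * b) * m) := by
  calc ∑ i ∈ block b j, (i : ℝ) * p i ≤ #(block b j) • ((j * b : ℝ) * m) := by
        refine sum_le_card_nsmul _ _ _ fun i hi => ?_
        have hij : i ≤ j * b := (mem_Icc.1 hi).2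
        gcongr
        · exact_mod_cast hij
        · exact_mod_cast hp i hi
    _ = b * ((j * b) * m) := by rw [card_block b hj, nsmul_eq_mul]

lemma sum_mul_le_of_mapsTo_reverse_blocks (K b : ℕ) (p : ℕ → ℕ)
    (hp : ∀ j, 1 ≤ j → j ≤ K → ∀ i ∈ block b j, p i ∈ block b (K + 1 - j)) :
    ∑ i ∈ Icc 1 (K * b), (i : ℝ) * p i ≤ b ^ 3 * (K * (K + 1) * (K + 2) / 6) := by
  calc ∑ i ∈ Icc 1 (K * b), (i : ℝ) * p i
      = ∑ j ∈ Icc 1 K, ∑ i ∈ block b j, (i : ℝ) * p i := sum_Icc_mul_eq_sum_blocks _ K b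
    _ ≤ ∑ j ∈ Icc 1 K, (b : ℝ) * ((j * b) * ((K + 1 - j) * b)) := by
      refine sum_le_sum fun j hj => ?_
      obtain ⟨hj1, hjK⟩ := mem_Icc.1 hj
      have hcast : (((K + 1 - j) * b : ℕ) : ℝ) = (K + 1 - j) * b := by
        rw [Nat.cast_mul, Nat.cast_sub (by omega)]; push_cast; ring
      rw [← hcast]
      exact sum_block_mul_le hj1 p fun i hi => (mem_Icc.1 (hp j hj1 hjK i hi)).2
    _ = b ^ 3 * ∑ j ∈ Icc 1 K, (j : ℝ) * (K + 1 - j) := by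
      rw [mul_sum]; exact sum_congr rfl fun j _ => by ring
    _ = b ^ 3 * (K * (K + 1) * (K + 2) / 6) := by rw [sum_Icc_mul_add_one_sub]

theorem stmt13 (ε : ℝ) (hε0 : 0 < ε) (hε2 : ε < 1 / 2)
    (a : ℝ) (ha : a = (6 * (1 - 2 * ε)) ^ ((1 : ℝ) / 3)) :
    ∃ K₀ : ℕ, ∀ K : ℕ, K₀ ≤ K → ∃ N : ℕ, ∀ n : ℕ, N ≤ n →
      ∀ b : ℕ, b = ⌊a * (n : ℝ) ^ ((1 : ℝ) / 3) / K⌋₊ →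
        ∀ p : ℕ → ℕ,
          Set.BijOn p (Set.Icc 1 (K * b)) (Set.Icc 1 (K * b)) →
          (∀ j, 1 ≤ j → j ≤ K →
            ∀ i ∈ Finset.Icc ((j - 1) * b + 1) (j * b),
              p i ∈ Finset.Icc ((K + 1 - j - 1) * b + 1) ((K + 1 - j) * b)) →
          (∑ i ∈ Finset.Icc 1 (K * b), (i : ℝ) * (p i : ℝ)) < (1 - ε) * n := by
  refine ⟨⌈6 / ε⌉₊ + 1, fun K hK => ⟨1, fun n hn b hb p _ hp => ?_⟩⟩
  have hεK : 6 ≤ ε * K := by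
    rw [← div_le_iff₀' hε0]
    exact (Nat.le_ceil _).trans (by exact_mod_cast hK.trans' (Nat.le_succ _))
  have hK0 : (0 : ℝ) < K := pos_of_mul_pos_right (by linarith) hε0.le
  have hn0 : (0 : ℝ) < n := by exact_mod_cast hn
  have hc : (0 : ℝ) ≤ 6 * (1 - 2 * ε) := by linarith
  have hb3 : (b : ℝ) ^ 3 * K ^ 3 ≤ 6 * (1 - 2 * ε) * n := by
    rw [hb, ha, ← Real.mul_rpow hc hn0.le]
    exact natFloor_cbrt_div_pow_three_mul_le (by positivity) hK0
  calc ∑ i ∈ Icc 1 (K * b), (i : ℝ) * p i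
      ≤ b ^ 3 * (K * (K + 1) * (K + 2) / 6) := sum_mul_le_of_mapsTo_reverse_blocks K b p hp
    _ = b ^ 3 * K ^ 3 * ((K + 1) * (K + 2) / (6 * K ^ 2)) := by field_simp
    _ ≤ 6 * (1 - 2 * ε) * n * ((K + 1) * (K + 2) / (6 * K ^ 2)) := by gcongr
    _ = (1 - 2 * ε) * ((K + 1) * (K + 2)) * n / K ^ 2 := by field_simp
    _ < (1 - ε) * K ^ 2 * n / K ^ 2 := by
      have := one_sub_two_mul_mul_lt hε0 hεK
      gcongr
    _ = (1 - ε) * n := by field_simp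
end
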